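/- Let a be a positive integer and b, d be nonzero integers. Suppose p is a prime such that v_p(a) > max{v_p(b), v_p(d)} and v_p(b) ≠ v_p(d). Then there exist a completely multiplicative unimodular function f, a real ε > 0, and a positive integer N such that for every n ≥ N one has a n + b ≥ 1, a n + d ≥ 1, and |f(a n + b) − f(a n + d)| ≥ ε; in particular liminf_{n→∞} |f(a n + b) − f(a n + d)| > 0. -/

import Mathlib

/-!
Take `f n = ζ ^ v_p(n)` for a root of unity `ζ` of order larger than `v_p(b)` and `v_p(d)`. Since
`v_p(a) > v_p(b)`, the ultrametric inequality gives `v_p(a n + b) = v_p(b)` for every `n ≠ 0`, and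
likewise for `d`; hence `f(a n + b) - f(a n + d) = ζ ^ v_p(b) - ζ ^ v_p(d)` is a constant, nonzero
because both exponents are smaller than the order of `ζ`.
-/

open MeasureTheory Filter

/-- `f` is completely multiplicative and unimodular on the positive integers. -/
def CompMultUnimodular (f : ℕ → ℂ) : Prop :=
  (∀ n : ℕ, 1 ≤ n → ‖f n‖ = 1) ∧
  (∀ m n : ℕ, 1 ≤ m → 1 ≤ n → f (m * n) = f m * f n)

open Complex

lemma compMultUnimodular_pow_padicValNat {z : ℂ} (hz : ‖z‖ = 1) (p : ℕ) [Fact p.Prime] :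
    CompMultUnimodular fun n => z ^ padicValNat p n :=
  ⟨fun n _ => by rw [norm_pow, hz, one_pow], fun m n hm hn => by
    dsimp only
    rw [padicValNat.mul (by omega) (by omega), pow_add]⟩

lemma padicValInt_add_eq_of_lt {p : ℕ} [Fact p.Prime] {x y : ℤ} (hx : x ≠ 0)
    (h : padicValInt p x < padicValInt p y) : padicValInt p (x + y) = padicValInt p x := by
  have hy : y ≠ 0 := by rintro rfl; simp at h
  have hxy : x + y ≠ 0 := by
    intro hsum
    rw [show y = -x by omega] at h
    simp [padicValInt] at h
  have hval : padicValRat p x < padicValRat p y := by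
    rwa [padicValRat.of_int, padicValRat.of_int, Nat.cast_lt]
  have := padicValRat.add_eq_of_lt (p := p) (by exact_mod_cast hxy) (by exact_mod_cast hx)
    (by exact_mod_cast hy) hval
  rw [← Int.cast_add, padicValRat.of_int, padicValRat.of_int] at this
  exact_mod_cast this

lemma padicValInt_mul_add_eq {p : ℕ} [Fact p.Prime] {a b n : ℤ} (hb : b ≠ 0) (hn : n ≠ 0)
    (h : padicValInt p b < padicValInt p a) : padicValInt p (a * n + b) = padicValInt p b := by
  have ha : a ≠ 0 := by rintro rfl; simp at h
  rw [add_comm]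
  refine padicValInt_add_eq_of_lt hb (h.trans_le ?_)
  rw [padicValInt.mul ha hn]
  exact Nat.le_add_right _ _

lemma padicValNat_toNat_of_nonneg (p : ℕ) {x : ℤ} (hx : 0 ≤ x) :
    padicValNat p x.toNat = padicValInt p x := by
  rw [← padicValInt.of_nat, Int.toNat_of_nonneg hx]

lemma one_le_mul_add_of_natAbs_lt {a n : ℕ} (ha : 0 < a) {b : ℤ} (hn : b.natAbs < n) :
    1 ≤ (a : ℤ) * n + b := by
  have hbn : -b < n := by omega
  have : (n : ℤ) ≤ a * n := le_mul_of_one_le_left (by positivity) (by exact_mod_cast ha)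
  omega

theorem separation_of_distinct_valuation
    (a : ℕ) (ha : 0 < a) (b d : ℤ) (hb : b ≠ 0) (hd : d ≠ 0)
    (p : ℕ) (hp : p.Prime)
    (hval : max (padicValInt p b) (padicValInt p d) < padicValInt p (a : ℤ))
    (hne : padicValInt p b ≠ padicValInt p d) :
    ∃ f : ℕ → ℂ, CompMultUnimodular f ∧ ∃ ε : ℝ, 0 < ε ∧ ∃ N : ℕ, 0 < N ∧
      ∀ n : ℕ, N ≤ n → 1 ≤ (a : ℤ) * n + b ∧ 1 ≤ (a : ℤ) * n + d ∧
        ε ≤ ‖f (((a : ℤ) * n + b).toNat) - f (((a : ℤ) * n + d).toNat)‖ := by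
  have : Fact p.Prime := ⟨hp⟩
  set k := padicValInt p b
  set l := padicValInt p d
  have hζ := isPrimitiveRoot_exp (k + l + 1) (by omega)
  set ζ := exp (2 * Real.pi * I / (k + l + 1 : ℕ))
  have hsep : ζ ^ k ≠ ζ ^ l := fun h => hne (hζ.pow_inj (by omega) (by omega) h)
  refine ⟨fun n => ζ ^ padicValNat p n,
    compMultUnimodular_pow_padicValNat (hζ.norm'_eq_one (by omega)) p,
    ‖ζ ^ k - ζ ^ l‖, norm_pos_iff.2 (sub_ne_zero.2 hsep),
    b.natAbs + d.natAbs + 1, by omega, fun n hn => ?_⟩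
  have hbn := one_le_mul_add_of_natAbs_lt ha (by omega : b.natAbs < n)
  have hdn := one_le_mul_add_of_natAbs_lt ha (by omega : d.natAbs < n)
  have hn0 : (n : ℤ) ≠ 0 := by omega
  refine ⟨hbn, hdn, le_of_eq ?_⟩
  dsimp only
  rw [padicValNat_toNat_of_nonneg p (by omega), padicValNat_toNat_of_nonneg p (by omega),
    padicValInt_mul_add_eq hb hn0 (lt_of_le_of_lt (le_max_left _ _) hval),
    padicValInt_mul_add_eq hd hn0 (lt_of_le_of_lt (le_max_right _ _) hval)]
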